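/- A graph consisting of c ≥ 1 disjoint copies of the complete graph K_k (k ≥ 2) has maximum modularity equal to 1 − 1/c. -/

import Mathlib

open Finset
open scoped Classical

noncomputable section

variable {V : Type*} [Fintype V]

/-- Number of edges of `G` with both endpoints in `A`. -/
def edgesIn (G : SimpleGraph V) (A : Finset V) : ℕ :=
  (G.edgeFinset.filter (fun e => ∀ v ∈ e, v ∈ A)).card

/-- Sum of degrees (in `G`) of the vertices of `A`. -/
def vol (G : SimpleGraph V) (A : Finset V) : ℕ :=
  ∑ v ∈ A, G.degree v

/-- Number of edges of `G` with exactly one endpoint in `A`. -/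
def bdry (G : SimpleGraph V) (A : Finset V) : ℕ :=
  (G.edgeFinset.filter (fun e => (∃ v ∈ e, v ∈ A) ∧ (∃ v ∈ e, v ∉ A))).card

/-- The modularity score of a vertex partition. -/
def modScore (G : SimpleGraph V) (P : Finpartition (univ : Finset V)) : ℝ :=
  (∑ A ∈ P.parts, (edgesIn G A : ℝ)) / (G.edgeFinset.card : ℝ)
    - (∑ A ∈ P.parts, (vol G A : ℝ) ^ 2) / (4 * (G.edgeFinset.card : ℝ) ^ 2)

/-- The maximum modularity of `G`. -/
def maxMod (G : SimpleGraph V) : ℝ :=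
  sSup {x : ℝ | ∃ P : Finpartition (univ : Finset V), modScore G P = x}

/-!
If a part `A` meets the `i`-th clique in `a A i` vertices, it spans `∑ i, (a A i).choose 2` edges
and has volume `(k - 1) * ∑ i, a A i`. Bounding `(∑ i, a A i) ^ 2` from below by
`∑ i, a A i ^ 2` decouples the cliques: the contribution of the `i`-th clique is then a
nondecreasing function of `∑ A, a A i ^ 2 ≤ (∑ A, a A i) ^ 2 = k ^ 2`, hence at most its value
`1/c - 1/c^2` at a partition that keeps the clique whole. Partitioning into the cliques attains
the resulting bound `1 - 1/c`.
-/

open SimpleGraph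

section Graph

variable {G : SimpleGraph V}

lemma edgesIn_univ : edgesIn G univ = #G.edgeFinset := by
  simp [edgesIn]

lemma vol_of_isRegularOfDegree {d : ℕ} (hG : G.IsRegularOfDegree d) (A : Finset V) :
    vol G A = #A * d := by
  simp [vol, hG.degree_eq]

lemma edgesIn_of_isClique {S : Finset V} (hS : G.IsClique (S : Set V)) :
    edgesIn G S = (#S).choose 2 := by
  rw [edgesIn, ← Sym2.card_image_offDiag]
  congr 1
  ext e
  induction e using Sym2.ind with
  | _ u v =>
    simp only [mem_filter, mem_edgeFinset, mem_edgeSet, Sym2.mem_iff, forall_eq_or_imp,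
      forall_eq, mem_image, mem_offDiag, Prod.exists, Function.uncurry_apply_pair, Sym2.eq_iff]
    constructor
    · rintro ⟨huv, hu, hv⟩
      exact ⟨u, v, ⟨hu, hv, huv.ne⟩, Or.inl ⟨rfl, rfl⟩⟩
    · rintro ⟨a, b, ⟨ha, hb, hab⟩, ⟨rfl, rfl⟩ | ⟨rfl, rfl⟩⟩
      · exact ⟨hS ha hb hab, ha, hb⟩
      · exact ⟨hS hb ha (Ne.symm hab), hb, ha⟩

lemma edgesIn_eq_sum_fiberwise {ι : Type*} [Fintype ι] (g : V → ι)
    (hg : ∀ u v, G.Adj u v → g u = g v) (A : Finset V) :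
    edgesIn G A = ∑ i, edgesIn G {v ∈ A | g v = i} := by
  have hdisj : ((univ : Finset ι) : Set ι).PairwiseDisjoint
      fun i => {e ∈ G.edgeFinset | ∀ v ∈ e, v ∈ ({v ∈ A | g v = i} : Finset V)} := by
    intro i _ j _ hij
    refine disjoint_left.2 fun e hi hj => ?_
    induction e using Sym2.ind with
    | _ u v =>
      have hui := (mem_filter.1 hi).2 u (Sym2.mem_mk_left u v)
      have huj := (mem_filter.1 hj).2 u (Sym2.mem_mk_left u v)
      exact hij ((mem_filter.1 hui).2.symm.trans (mem_filter.1 huj).2)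
  simp only [edgesIn]
  rw [← card_biUnion hdisj]
  congr 1
  ext e
  induction e using Sym2.ind with
  | _ u v =>
    simp only [mem_filter, mem_biUnion, mem_univ, true_and, mem_edgeFinset, mem_edgeSet,
      Sym2.mem_iff, forall_eq_or_imp, forall_eq]
    constructor
    · rintro ⟨huv, hu, hv⟩
      exact ⟨g u, huv, ⟨hu, rfl⟩, hv, (hg u v huv).symm⟩
    · rintro ⟨i, huv, ⟨hu, -⟩, hv, -⟩
      exact ⟨huv, hu, hv⟩

end Graph

lemma Finpartition.sum_card_filter_parts {α : Type*} [DecidableEq α] {s : Finset α}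
    (P : Finpartition s) (p : α → Prop) [DecidablePred p] :
    ∑ A ∈ P.parts, #{v ∈ A | p v} = #{v ∈ s | p v} := by
  conv_rhs => rw [← P.biUnion_parts, filter_biUnion]
  rw [card_biUnion fun A hA B hB hAB =>
    (P.disjoint hA hB hAB).mono (filter_subset _ _) (filter_subset _ _)]
  rfl

section Inequality

variable {c k : ℝ}

lemma sum_sq_sub_div_le {α : Type*} (s : Finset α) (b : α → ℝ) (hb : ∀ A ∈ s, 0 ≤ b A)
    (hsum : ∑ A ∈ s, b A = k) (hc : 1 ≤ c) (hk : 1 < k) :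
    ∑ A ∈ s, ((b A ^ 2 - b A) / (c * k * (k - 1)) - b A ^ 2 / (c ^ 2 * k ^ 2))
      ≤ 1 / c - 1 / c ^ 2 := by
  have hT : ∑ A ∈ s, b A ^ 2 ≤ k ^ 2 := hsum ▸ sum_sq_le_sq_sum_of_nonneg hb
  have hck : 0 < c * k := by nlinarith
  have hcoef : 0 ≤ 1 / (c * k * (k - 1)) - 1 / (c ^ 2 * k ^ 2) :=
    sub_nonneg.2 <| one_div_le_one_div_of_le (mul_pos hck (by linarith))
      (by nlinarith [mul_le_mul_of_nonneg_left (show k ≤ c * k by nlinarith) hck.le])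
  calc ∑ A ∈ s, ((b A ^ 2 - b A) / (c * k * (k - 1)) - b A ^ 2 / (c ^ 2 * k ^ 2))
      = (∑ A ∈ s, b A ^ 2) * (1 / (c * k * (k - 1)) - 1 / (c ^ 2 * k ^ 2))
          - (∑ A ∈ s, b A) / (c * k * (k - 1)) := by
        rw [sum_mul, sum_div, ← sum_sub_distrib]
        exact sum_congr rfl fun A _ => by ring
    _ ≤ k ^ 2 * (1 / (c * k * (k - 1)) - 1 / (c ^ 2 * k ^ 2)) - k / (c * k * (k - 1)) := by
        rw [hsum]
        exact sub_le_sub_right (mul_le_mul_of_nonneg_right hT hcoef) _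
    _ = 1 / c - 1 / c ^ 2 := by
        have : k - 1 ≠ 0 := by linarith
        field_simp
        ring

variable {ι : Type*} [Fintype ι]

/-- The term of a part in the modularity of `Fintype.card ι` disjoint cliques of size `k`, when
the part meets the `i`-th clique in `a i` vertices. -/
def partScore (k : ℝ) (a : ι → ℝ) : ℝ :=
  ∑ i, (a i ^ 2 - a i) / (Fintype.card ι * k * (k - 1))
    - (∑ i, a i) ^ 2 / (Fintype.card ι ^ 2 * k ^ 2)

lemma sum_partScore_le [Nonempty ι] {α : Type*} (s : Finset α) (a : α → ι → ℝ)
    (ha : ∀ A ∈ s, ∀ i, 0 ≤ a A i) (hsum : ∀ i, ∑ A ∈ s, a A i = k) (hk : 1 < k) :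
    ∑ A ∈ s, partScore k (a A) ≤ 1 - 1 / Fintype.card ι := by
  have hc : (1 : ℝ) ≤ Fintype.card ι := by exact_mod_cast Fintype.card_pos
  calc _ ≤ ∑ A ∈ s, ∑ i, ((a A i ^ 2 - a A i) / (Fintype.card ι * k * (k - 1))
          - a A i ^ 2 / (Fintype.card ι ^ 2 * k ^ 2)) := by
        refine sum_le_sum fun A hA => ?_
        rw [partScore, sum_sub_distrib, ← sum_div (f := fun i => a A i ^ 2)]
        gcongr
        exact sum_sq_le_sq_sum_of_nonneg fun i _ => ha A hA i
    _ = ∑ i, ∑ A ∈ s, ((a A i ^ 2 - a A i) / (Fintype.card ι * k * (k - 1))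
          - a A i ^ 2 / (Fintype.card ι ^ 2 * k ^ 2)) := sum_comm
    _ ≤ ∑ _i : ι, (1 / (Fintype.card ι : ℝ) - 1 / (Fintype.card ι : ℝ) ^ 2) :=
        sum_le_sum fun i _ => sum_sq_sub_div_le s _ (fun A hA => ha A hA i) (hsum i) hc hk
    _ = 1 - 1 / Fintype.card ι := by
        rw [sum_const, card_univ, nsmul_eq_mul]
        field_simp

lemma partScore_ite_eq [Nonempty ι] (hk : 1 < k) (j : ι) :
    (partScore k fun i => if j = i then k else 0)
      = 1 / Fintype.card ι - 1 / Fintype.card ι ^ 2 := by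
  have hc : (Fintype.card ι : ℝ) ≠ 0 := by exact_mod_cast Fintype.card_ne_zero
  have hk1 : k - 1 ≠ 0 := by linarith
  have hk0 : k ≠ 0 := by linarith
  rw [partScore, sum_eq_single j (fun i _ hij => by simp [Ne.symm hij]) (by simp)]
  simp only [if_true, sum_ite_eq, mem_univ]
  field_simp

end Inequality

section FiberCliques

/-- Not an `abbrev`: instance search must not see `fromRel`, so that `Adj` gets the classical
`DecidableRel` instance used in `modScore`. -/
def fiberCliques {ι : Type*} (f : V → ι) : SimpleGraph V :=
  SimpleGraph.fromRel fun u v => f u = f v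

lemma fiberCliques_adj {W ι : Type*} {f : W → ι} {u v : W} :
    (fiberCliques f).Adj u v ↔ u ≠ v ∧ f u = f v := by
  simp [fiberCliques, eq_comm]

variable {ι : Type*} {f : V → ι} {k : ℕ}

lemma degree_fiberCliques (v : V) : (fiberCliques f).degree v = #{u | f u = f v} - 1 := by
  rw [← card_neighborFinset_eq_degree]
  have hN : (fiberCliques f).neighborFinset v = ({u | f u = f v} : Finset V).erase v := by
    ext u
    simp [fiberCliques_adj, eq_comm]
  rw [hN, card_erase_of_mem (by simp)]

lemma isRegularOfDegree_fiberCliques (hf : ∀ i, #{v | f v = i} = k) :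
    (fiberCliques f).IsRegularOfDegree (k - 1) := fun v => by
  rw [degree_fiberCliques, hf]

lemma exists_eq_fiber_of_mem_parts_ofSetoid_ker {A : Finset V}
    (hA : A ∈ (Finpartition.ofSetoid (Setoid.ker f)).parts) :
    ∃ j, A = ({v | f v = j} : Finset V) := by
  obtain ⟨a, ha⟩ := Finpartition.nonempty_of_mem_parts _ hA
  refine ⟨f a, ?_⟩
  rw [← Finpartition.part_eq_of_mem _ hA ha]
  ext b
  simp [Finpartition.mem_part_ofSetoid_iff_rel, Setoid.ker_def, eq_comm]

lemma card_filter_fiber_eq (hf : ∀ i, #{v | f v = i} = k) (i j : ι) :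
    #{v ∈ ({v | f v = j} : Finset V) | f v = i} = if j = i then k else 0 := by
  split_ifs with h
  · simp [filter_filter, h, hf]
  · simp only [filter_filter, card_eq_zero, filter_eq_empty_iff, mem_univ, true_implies]
    rintro v ⟨rfl, rfl⟩
    exact h rfl

variable [Fintype ι]

lemma edgesIn_fiberCliques (A : Finset V) :
    edgesIn (fiberCliques f) A = ∑ i, (#{v ∈ A | f v = i}).choose 2 := by
  rw [edgesIn_eq_sum_fiberwise f fun u v huv => (fiberCliques_adj.1 huv).2]
  refine sum_congr rfl fun i _ => edgesIn_of_isClique fun u hu v hv huv => ?_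
  simp only [coe_filter, Set.mem_ofPred_eq] at hu hv
  exact fiberCliques_adj.2 ⟨huv, hu.2.trans hv.2.symm⟩

lemma edgesIn_univ_fiberCliques (hf : ∀ i, #{v | f v = i} = k) :
    edgesIn (fiberCliques f) univ = Fintype.card ι * k.choose 2 := by
  simp [edgesIn_fiberCliques, hf]

lemma card_parts_ofSetoid_ker (hk : 0 < k) (hf : ∀ i, #{v | f v = i} = k) :
    #(Finpartition.ofSetoid (Setoid.ker f)).parts = Fintype.card ι := by
  have hcard : Fintype.card V = Fintype.card ι * k := by
    rw [← card_univ, card_eq_sum_card_fiberwise fun v _ => mem_univ (f v)]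
    simp [hf]
  have hsum := (Finpartition.ofSetoid (Setoid.ker f)).sum_card_parts
  rw [sum_const_nat fun A hA => ?_, card_univ, hcard] at hsum
  · exact Nat.eq_of_mul_eq_mul_right hk hsum
  · obtain ⟨j, rfl⟩ := exists_eq_fiber_of_mem_parts_ofSetoid_ker hA
    exact hf j

variable [Nonempty ι]

lemma modScore_fiberCliques (hk : 2 ≤ k) (hf : ∀ i, #{v | f v = i} = k)
    (P : Finpartition (univ : Finset V)) :
    modScore (fiberCliques f) P = ∑ A ∈ P.parts, partScore k fun i => #{v ∈ A | f v = i} := by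
  have hc : (Fintype.card ι : ℝ) ≠ 0 := by exact_mod_cast Fintype.card_ne_zero
  have hk1 : (k : ℝ) - 1 ≠ 0 := by
    have : (2 : ℝ) ≤ k := by exact_mod_cast hk
    linarith
  have hm : ((Fintype.card ι * k.choose 2 : ℕ) : ℝ) = Fintype.card ι * k * (k - 1) / 2 := by
    push_cast [Nat.cast_choose_two]
    ring
  rw [modScore, ← edgesIn_univ, edgesIn_univ_fiberCliques hf, hm, sum_div, sum_div,
    ← sum_sub_distrib]
  refine sum_congr rfl fun A _ => ?_
  rw [edgesIn_fiberCliques, vol_of_isRegularOfDegree (isRegularOfDegree_fiberCliques hf),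
    card_eq_sum_card_fiberwise (s := A) fun v _ => mem_univ (f v), Nat.cast_sum, sum_div,
    partScore]
  congr 1
  · refine sum_congr rfl fun i _ => ?_
    rw [Nat.cast_choose_two]
    field_simp
  · push_cast [Nat.cast_sub (by omega : 1 ≤ k)]
    field_simp
    ring

lemma modScore_fiberCliques_le (hk : 2 ≤ k) (hf : ∀ i, #{v | f v = i} = k)
    (P : Finpartition (univ : Finset V)) :
    modScore (fiberCliques f) P ≤ 1 - 1 / Fintype.card ι := by
  have hsum (i : ι) : ∑ A ∈ P.parts, (#{v ∈ A | f v = i} : ℝ) = k := by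
    exact_mod_cast (P.sum_card_filter_parts _).trans (hf i)
  rw [modScore_fiberCliques hk hf]
  exact sum_partScore_le P.parts _ (fun _ _ _ => Nat.cast_nonneg _) hsum
    (by exact_mod_cast hk)

lemma modScore_fiberCliques_ofSetoid_ker (hk : 2 ≤ k) (hf : ∀ i, #{v | f v = i} = k) :
    modScore (fiberCliques f) (Finpartition.ofSetoid (Setoid.ker f)) = 1 - 1 / Fintype.card ι := by
  have hc : (Fintype.card ι : ℝ) ≠ 0 := by exact_mod_cast Fintype.card_ne_zero
  have hpart : ∀ A ∈ (Finpartition.ofSetoid (Setoid.ker f)).parts,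
      (partScore k fun i => #{v ∈ A | f v = i})
        = 1 / Fintype.card ι - 1 / Fintype.card ι ^ 2 := by
    intro A hA
    obtain ⟨j, rfl⟩ := exists_eq_fiber_of_mem_parts_ofSetoid_ker hA
    simp only [card_filter_fiber_eq hf, Nat.cast_ite, Nat.cast_zero]
    exact partScore_ite_eq (by exact_mod_cast hk) j
  rw [modScore_fiberCliques hk hf, sum_congr rfl hpart, sum_const,
    card_parts_ofSetoid_ker (by omega) hf, nsmul_eq_mul]
  field_simp

lemma maxMod_fiberCliques (hk : 2 ≤ k) (hf : ∀ i, #{v | f v = i} = k) :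
    maxMod (fiberCliques f) = 1 - 1 / Fintype.card ι :=
  IsGreatest.csSup_eq ⟨⟨_, modScore_fiberCliques_ofSetoid_ker hk hf⟩,
    by rintro _ ⟨P, rfl⟩; exact modScore_fiberCliques_le hk hf P⟩

end FiberCliques

lemma card_filter_fst_eq {α β : Type*} [Fintype α] [Fintype β] (a : α) :
    #{p : α × β | p.1 = a} = Fintype.card β := by
  refine (congrArg card (?_ : _ = {a} ×ˢ univ)).trans (by simp)
  ext ⟨x, y⟩
  simp [eq_comm]

/-- A disjoint union of `c` copies of the complete graph `K_k` (`c ≥ 1`, `k ≥ 2`)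
has maximum modularity `1 - 1/c`. -/
theorem maxMod_disjoint_cliques (c k : ℕ) (hc : 1 ≤ c) (hk : 2 ≤ k) :
    maxMod (SimpleGraph.fromRel (fun u v : Fin c × Fin k => u.1 = v.1)) =
      1 - 1 / (c : ℝ) := by
  have : Nonempty (Fin c) := ⟨⟨0, hc⟩⟩
  have h := maxMod_fiberCliques (f := (Prod.fst : Fin c × Fin k → Fin c)) hk fun i =>
    (card_filter_fst_eq i).trans (Fintype.card_fin k)
  rwa [Fintype.card_fin] at h

end
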